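/- Let β > 0 and α with 2α > 1, and let h(y) = y/(β(1 - e^{-y(1+αy)})) extended by h(0) = 1/β. Then there exists a unique ȳ > 0 such that h is strictly decreasing on [0, ȳ] and strictly increasing on [ȳ, ∞). -/

import Mathlib

open Set Filter Real

/-! The derivative of `h` on `(0, ∞)` is a positive multiple of `g`, so it suffices that `g` is
negative and then positive on `(0, ∞)`. Since `g''' > 0`, `g''` is increasing, with
`g''(0) = 1 - 2α < 0`, and is eventually positive, so it changes sign exactly once. A function
vanishing at `0`, eventually positive, whose derivative changes sign once from `-` to `+`,
changes sign once itself: this passes the sign pattern from `g''` to `g'` and then to `g`.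
Uniqueness of `ȳ` holds because no function is strictly decreasing on `[0, ȳ]` and strictly
increasing on `[ȳ', ∞)` with `ȳ' < ȳ`. -/

structure NegThenPosAt (f : ℝ → ℝ) (c : ℝ) : Prop where
  zero_lt : 0 < c
  neg : ∀ y ∈ Ioo 0 c, f y < 0
  pos : ∀ y, c < y → 0 < f y

lemma NegThenPosAt.mul_left {f w : ℝ → ℝ} {c : ℝ} (hf : NegThenPosAt f c)
    (hw : ∀ y, 0 < y → 0 < w y) : NegThenPosAt (fun y => w y * f y) c where
  zero_lt := hf.zero_lt
  neg y hy := mul_neg_of_pos_of_neg (hw y hy.1) (hf.neg y hy)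
  pos y hy := mul_pos (hw y (hf.zero_lt.trans hy)) (hf.pos y hy)

section Derivative

variable {f f' : ℝ → ℝ} {c : ℝ}

lemma NegThenPosAt.strictAntiOn_Icc (hf' : NegThenPosAt f' c) (hcont : ContinuousOn f (Ici 0))
    (hf : ∀ y, 0 < y → HasDerivAt f (f' y) y) : StrictAntiOn f (Icc 0 c) := by
  refine strictAntiOn_of_hasDerivWithinAt_neg (f' := f') (convex_Icc 0 c)
    (hcont.mono Icc_subset_Ici_self) (fun y hy => ?_) (fun y hy => ?_) <;>
  rw [interior_Icc] at hy
  · exact (hf y hy.1).hasDerivWithinAt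
  · exact hf'.neg y hy

lemma NegThenPosAt.strictMonoOn_Ici (hf' : NegThenPosAt f' c) (hcont : ContinuousOn f (Ici 0))
    (hf : ∀ y, 0 < y → HasDerivAt f (f' y) y) : StrictMonoOn f (Ici c) := by
  refine strictMonoOn_of_hasDerivWithinAt_pos (f' := f') (convex_Ici c)
    (hcont.mono (Ici_subset_Ici.2 hf'.zero_lt.le)) (fun y hy => ?_) (fun y hy => ?_) <;>
  rw [interior_Ici] at hy
  · exact (hf y (hf'.zero_lt.trans hy)).hasDerivWithinAt
  · exact hf'.pos y hy

end Derivative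

lemma exists_zero_of_strictMonoOn_Ici {f : ℝ → ℝ} {a : ℝ} (hcont : ContinuousOn f (Ici a))
    (hmono : StrictMonoOn f (Ici a)) (ha : f a < 0) (htop : ∀ᶠ y in atTop, 0 < f y) :
    ∃ e, a < e ∧ (∀ y ∈ Ico a e, f y < 0) ∧ ∀ y, e < y → 0 < f y := by
  obtain ⟨Y, hY, hYa⟩ := (htop.and (eventually_ge_atTop a)).exists
  obtain ⟨e, he, hfe⟩ := intermediate_value_Ioo hYa (hcont.mono Icc_subset_Ici_self)
    (show (0 : ℝ) ∈ Ioo (f a) (f Y) from ⟨ha, hY⟩)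
  refine ⟨e, he.1, fun y hy => ?_, fun y hy => ?_⟩
  · exact hfe ▸ hmono hy.1 he.1.le hy.2
  · exact hfe ▸ hmono he.1.le (he.1.trans hy).le hy

lemma NegThenPosAt.of_strictMonoOn_Ici {f : ℝ → ℝ} (hcont : ContinuousOn f (Ici 0))
    (hmono : StrictMonoOn f (Ici 0)) (h0 : f 0 < 0) (htop : ∀ᶠ y in atTop, 0 < f y) :
    ∃ c, NegThenPosAt f c := by
  obtain ⟨c, hc, hneg, hpos⟩ := exists_zero_of_strictMonoOn_Ici hcont hmono h0 htop
  exact ⟨c, hc, fun y hy => hneg y (Ioo_subset_Ico_self hy), hpos⟩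

lemma NegThenPosAt.of_hasDerivAt {f f' : ℝ → ℝ} {d : ℝ} (hf' : NegThenPosAt f' d)
    (hf : ∀ y, HasDerivAt f (f' y) y) (h0 : f 0 = 0) (htop : ∀ᶠ y in atTop, 0 < f y) :
    ∃ e, NegThenPosAt f e := by
  have hcont : Continuous f := continuous_iff_continuousAt.2 fun y => (hf y).continuousAt
  have hanti := hf'.strictAntiOn_Icc hcont.continuousOn fun y _ => hf y
  have hmono := hf'.strictMonoOn_Ici hcont.continuousOn fun y _ => hf y
  have hd := hf'.zero_lt
  have hneg : ∀ y ∈ Ioc 0 d, f y < 0 := fun y hy =>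
    h0 ▸ hanti (left_mem_Icc.2 hd.le) (Ioc_subset_Icc_self hy) hy.1
  obtain ⟨e, hde, hneg', hpos⟩ := exists_zero_of_strictMonoOn_Ici hcont.continuousOn hmono
    (hneg d (right_mem_Ioc.2 hd)) htop
  refine ⟨e, hd.trans hde, fun y hy => ?_, hpos⟩
  rcases le_or_gt y d with hyd | hyd
  · exact hneg y ⟨hy.1, hyd⟩
  · exact hneg' y ⟨hyd.le, hy.2⟩

lemma le_of_strictMonoOn_Ici_of_strictAntiOn_Icc {α β : Type*} [LinearOrder α] [Preorder β]
    {f : α → β} {a b c : α} (hab : a ≤ b) (hmono : StrictMonoOn f (Ici b))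
    (hanti : StrictAntiOn f (Icc a c)) : c ≤ b := by
  by_contra! hbc
  exact lt_asymm (hmono le_rfl hbc.le hbc)
    (hanti ⟨hab, hbc.le⟩ ⟨hab.trans hbc.le, le_rfl⟩ hbc)

namespace YIsocline

variable {α β : ℝ}

noncomputable def u (α y : ℝ) : ℝ := y * (1 + α * y)
noncomputable def g (α y : ℝ) : ℝ := exp (u α y) - 1 - y * (1 + 2 * α * y)
noncomputable def g' (α y : ℝ) : ℝ := (1 + 2 * α * y) * exp (u α y) - 1 - 4 * α * y
noncomputable def g'' (α y : ℝ) : ℝ := (2 * α + (1 + 2 * α * y) ^ 2) * exp (u α y) - 4 * α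
noncomputable def g''' (α y : ℝ) : ℝ :=
  (1 + 2 * α * y) * (6 * α + (1 + 2 * α * y) ^ 2) * exp (u α y)

lemma hasDerivAt_u (α y : ℝ) : HasDerivAt (u α) (1 + 2 * α * y) y := by
  refine ((hasDerivAt_id' y).fun_mul
    ((hasDerivAt_id' y).const_mul α |>.const_add 1)).congr_deriv ?_
  ring

lemma hasDerivAt_g (α y : ℝ) : HasDerivAt (g α) (g' α y) y := by
  refine (((hasDerivAt_u α y).exp.sub_const 1).fun_sub ((hasDerivAt_id' y).fun_mul
    ((hasDerivAt_id' y).const_mul (2 * α) |>.const_add 1))).congr_deriv ?_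
  simp only [g']; ring

lemma hasDerivAt_g' (α y : ℝ) : HasDerivAt (g' α) (g'' α y) y := by
  refine (((((hasDerivAt_id' y).const_mul (2 * α)).const_add 1).fun_mul
    (hasDerivAt_u α y).exp).sub_const 1 |>.fun_sub
      ((hasDerivAt_id' y).const_mul (4 * α))).congr_deriv ?_
  simp only [g'']; ring

lemma hasDerivAt_g'' (α y : ℝ) : HasDerivAt (g'' α) (g''' α y) y := by
  refine ((((((hasDerivAt_id' y).const_mul (2 * α)).const_add 1).fun_pow 2).const_add
    (2 * α)).fun_mul (hasDerivAt_u α y).exp |>.sub_const (4 * α)).congr_deriv ?_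
  simp only [g''']; push_cast; ring

lemma u_pos (hα : 0 ≤ α) {y : ℝ} (hy : 0 < y) : 0 < u α y := by
  unfold u; positivity

lemma g'''_pos (hα : 0 ≤ α) {y : ℝ} (hy : 0 ≤ y) : 0 < g''' α y := by
  unfold g'''; positivity

lemma eventually_g''_pos (hα : 0 ≤ α) : ∀ᶠ y in atTop, 0 < g'' α y := by
  refine eventually_atTop.2 ⟨1, fun y hy => ?_⟩
  have he : 1 ≤ exp (u α y) := one_le_exp (u_pos hα (by linarith)).le
  unfold g''
  nlinarith [mul_nonneg hα (sub_nonneg.2 hy), sq_nonneg (2 * α * y)]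

lemma eventually_g'_pos (hα : 0 ≤ α) : ∀ᶠ y in atTop, 0 < g' α y := by
  refine eventually_atTop.2 ⟨1, fun y hy => ?_⟩
  have he := mul_le_mul_of_nonneg_left (add_one_le_exp (u α y))
    (show 0 ≤ 1 + 2 * α * y by positivity)
  unfold g' u at *
  have hy0 : 0 ≤ y := by linarith
  nlinarith [mul_nonneg (mul_nonneg hα hy0) (by linarith : (0:ℝ) ≤ 3 * y - 2),
    mul_nonneg (mul_nonneg hα hα) (pow_nonneg hy0 3)]

lemma one_add_add_sq_div_four_le_exp {t : ℝ} (ht : 0 ≤ t) : 1 + t + t ^ 2 / 4 ≤ exp t := by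
  have h := add_one_le_exp (t / 2)
  have h2 : exp (t / 2) * exp (t / 2) = exp t := by rw [← exp_add]; ring_nf
  nlinarith [exp_pos (t / 2)]

lemma eventually_g_pos (hα : 0 ≤ α) : ∀ᶠ y in atTop, 0 < g α y := by
  refine eventually_atTop.2 ⟨2, fun y hy => ?_⟩
  have he := one_add_add_sq_div_four_le_exp (u_pos hα (by linarith : (0:ℝ) < y)).le
  unfold g u at *
  have hy0 : 0 ≤ y := by linarith
  nlinarith [mul_nonneg hα (pow_nonneg hy0 2),
    mul_nonneg (mul_nonneg hα (pow_nonneg hy0 2)) (by linarith : (0:ℝ) ≤ y - 2),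
    mul_nonneg (mul_nonneg hα hα) (pow_nonneg hy0 4)]

lemma exists_negThenPosAt_g (hα : 1 < 2 * α) : ∃ e, NegThenPosAt (g α) e := by
  have hα0 : 0 ≤ α := by linarith
  have hcont'' : Continuous (g'' α) :=
    continuous_iff_continuousAt.2 fun y => (hasDerivAt_g'' α y).continuousAt
  have hmono'' : StrictMonoOn (g'' α) (Ici 0) :=
    strictMonoOn_of_hasDerivWithinAt_pos (convex_Ici 0) hcont''.continuousOn
      (fun y _ => (hasDerivAt_g'' α y).hasDerivWithinAt)
      (fun y hy => g'''_pos hα0 (interior_subset hy))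
  have h''0 : g'' α 0 < 0 := by simp only [g'', u]; norm_num; linarith
  obtain ⟨c, hc⟩ := NegThenPosAt.of_strictMonoOn_Ici hcont''.continuousOn hmono'' h''0
    (eventually_g''_pos hα0)
  obtain ⟨d, hd⟩ := hc.of_hasDerivAt (hasDerivAt_g' α) (by simp [g', u])
    (eventually_g'_pos hα0)
  exact hd.of_hasDerivAt (hasDerivAt_g α) (by simp [g, u]) (eventually_g_pos hα0)

noncomputable def isocline (α β y : ℝ) : ℝ :=
  if y = 0 then 1 / β else y / (β * (1 - exp (-u α y)))

lemma one_sub_exp_neg_u_pos (hα : 0 ≤ α) {y : ℝ} (hy : 0 < y) : 0 < 1 - exp (-u α y) :=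
  sub_pos.2 (exp_lt_one_iff.2 (neg_neg_of_pos (u_pos hα hy)))

lemma hasDerivAt_one_sub_exp_neg_u (α y : ℝ) :
    HasDerivAt (fun y => 1 - exp (-u α y)) ((1 + 2 * α * y) * exp (-u α y)) y := by
  refine ((hasDerivAt_u α y).fun_neg.exp.const_sub 1).congr_deriv ?_
  ring

lemma hasDerivAt_isocline (hα : 0 ≤ α) (hβ : β ≠ 0) {y : ℝ} (hy : 0 < y) :
    HasDerivAt (isocline α β) (exp (-u α y) / (β * (1 - exp (-u α y)) ^ 2) * g α y) y := by
  have hF := one_sub_exp_neg_u_pos hα hy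
  have hquot := (hasDerivAt_id' y).fun_div ((hasDerivAt_one_sub_exp_neg_u α y).const_mul β)
    (mul_ne_zero hβ hF.ne')
  have hexp : exp (-u α y) * exp (u α y) = 1 := by rw [← exp_add, neg_add_cancel, exp_zero]
  refine (hquot.congr_of_eventuallyEq ((eventually_ne_nhds hy.ne').mono
    fun x hx => if_neg hx)).congr_deriv ?_
  field_simp
  simp only [g]
  linear_combination -hexp

lemma continuousAt_isocline_zero (α : ℝ) (hβ : β ≠ 0) : ContinuousAt (isocline α β) 0 := by
  have hupdate :
      isocline α β = Function.update (fun y => y / (β * (1 - exp (-u α y)))) 0 (1 / β) := by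
    ext y; simp only [isocline, Function.update_apply]
  have hu0 : u α 0 = 0 := by simp [u]
  have hslope := (hasDerivAt_one_sub_exp_neg_u α 0).tendsto_slope_zero
  simp only [zero_add, hu0, neg_zero, exp_zero, sub_self, sub_zero, mul_zero, add_zero,
    one_mul, smul_eq_mul] at hslope
  rw [hupdate, continuousAt_update_same]
  convert (hslope.const_mul β).inv₀ (by simpa using hβ) using 1
  · ext t; simp only [mul_inv, inv_inv, div_eq_mul_inv]; ring
  · simp

lemma continuousOn_isocline (hα : 0 ≤ α) (hβ : β ≠ 0) :
    ContinuousOn (isocline α β) (Ici 0) := by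
  intro y hy
  rcases (mem_Ici.1 hy).eq_or_lt with rfl | hy
  · exact (continuousAt_isocline_zero α hβ).continuousWithinAt
  · exact (hasDerivAt_isocline hα hβ hy).continuousAt.continuousWithinAt

end YIsocline

open YIsocline in
theorem y_isocline_unimodal (α β : ℝ) (hα : 1 < 2 * α) (hβ : 0 < β) :
    let h : ℝ → ℝ := fun y =>
      if y = 0 then 1 / β else y / (β * (1 - Real.exp (-(y * (1 + α * y)))))
    ∃! ybar : ℝ, 0 < ybar ∧
      StrictAntiOn h (Set.Icc 0 ybar) ∧ StrictMonoOn h (Set.Ici ybar) := by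
  intro h
  have hα0 : 0 ≤ α := by linarith
  obtain ⟨e, hg⟩ := exists_negThenPosAt_g hα
  have hderiv := hg.mul_left (w := fun y => exp (-u α y) / (β * (1 - exp (-u α y)) ^ 2))
    fun y hy => by have := one_sub_exp_neg_u_pos hα0 hy; positivity
  have hcont := continuousOn_isocline hα0 hβ.ne'
  have hisocline := fun y (hy : 0 < y) => hasDerivAt_isocline hα0 hβ.ne' hy
  have hanti : StrictAntiOn h (Icc 0 e) := hderiv.strictAntiOn_Icc hcont hisocline
  have hmono : StrictMonoOn h (Ici e) := hderiv.strictMonoOn_Ici hcont hisocline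
  refine ⟨e, ⟨hg.zero_lt, hanti, hmono⟩,
    fun y ⟨hy, hanti', hmono'⟩ => le_antisymm ?_ ?_⟩
  · exact le_of_strictMonoOn_Ici_of_strictAntiOn_Icc hg.zero_lt.le hmono hanti'
  · exact le_of_strictMonoOn_Ici_of_strictAntiOn_Icc hy.le hmono' hanti
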